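/- arXiv:2206.14280 — 3 statements merged into one kernel-verified Lean document; each statement's English description precedes it below -/
import Mathlib

section
/- Let α, β > −1, let μ, p > 0 with μp = k a positive integer, and let b > −p. Then for each n ∈ ℕ there exist real coefficients c_0, …, c_{n+k} such that for every x ∈ (−1,1], I^μ[Q_n^{(α,β,b,p)}](x) = Σ_{m=0}^{n+k} c_m Q_m^{(α,β,b,p)}(x). That is, the fractional integral operator I^μ maps the JFP basis to itself via a matrix with lower bandwidth k (bandwidths (k, ∞)). -/
open MeasureTheory

noncomputable def Ccoef (α β : ℝ) (k n : ℕ) : ℝ :=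
  if k ≤ n then
    (-1 : ℝ) ^ (n - k) * (ascPochhammer ℝ (n - k)).eval ((k : ℝ) + β + 1)
      * (ascPochhammer ℝ k).eval ((n : ℝ) + α + β + 1)
      / (2 ^ k * (Nat.factorial (n - k)) * (Nat.factorial k))
  else 0

noncomputable def jacobiP (α β : ℝ) (n : ℕ) (x : ℝ) : ℝ :=
  ∑ k ∈ Finset.range (n + 1), Ccoef α β k n * (1 + x) ^ k

noncomputable def jfpQ (α β b p : ℝ) (n : ℕ) (x : ℝ) : ℝ :=
  (2 * ((1 + x) / 2) ^ (1 / p)) ^ b * jacobiP α β n (2 * ((1 + x) / 2) ^ (1 / p) - 1)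

noncomputable def fracInt (μ : ℝ) (f : ℝ → ℝ) (x : ℝ) : ℝ :=
  (1 / Real.Gamma μ) * ∫ t in (-1 : ℝ)..x, (x - t) ^ (μ - 1) * f t

/-
Write `Q_n(t) = Σ_{j ≤ n} d_j (1+t)^{(b+j)/p}`. By the Beta-integral substitution, `I^μ` sends
`(1+t)^s` to `B(μ, s+1)/Γ(μ) · (1+x)^{s+μ}`, and `μ = k/p` shifts the exponent `(b+j)/p` to
`(b+j+k)/p`. The change of basis between `Q_0, …, Q_m` and the powers `(1+t)^{(b+j)/p}`,
`j ≤ m`, is triangular with nonzero diagonal (`α, β > -1`), so every such power with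
`j ≤ n + k` is a combination of `Q_0, …, Q_{n+k}`.
-/

open intervalIntegral

lemma intervalIntegrable_sub_rpow_mul_sub_rpow {a x r s : ℝ} (hax : a < x) (hr : -1 < r)
    (hs : -1 < s) :
    IntervalIntegrable (fun t => (x - t) ^ r * (t - a) ^ s) volume a x := by
  set m := (a + x) / 2 with hm
  have hleft : IntervalIntegrable (fun t => (x - t) ^ r * (t - a) ^ s) volume a m := by
    have h := (intervalIntegrable_rpow' hs (a := 0) (b := m - a)).comp_sub_right a
    rw [zero_add, sub_add_cancel] at h
    refine h.continuousOn_mul (ContinuousOn.rpow_const (by fun_prop) fun t ht => Or.inl ?_)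
    rw [Set.uIcc_of_le (by linarith)] at ht
    linarith [ht.2]
  have hright : IntervalIntegrable (fun t => (x - t) ^ r * (t - a) ^ s) volume m x := by
    have h := (intervalIntegrable_rpow' hr (a := x - m) (b := 0)).comp_sub_left x
    rw [sub_sub_cancel, sub_zero] at h
    refine h.mul_continuousOn (ContinuousOn.rpow_const (by fun_prop) fun t ht => Or.inl ?_)
    rw [Set.uIcc_of_le (by linarith)] at ht
    linarith [ht.1]
  exact hleft.trans hright

lemma integral_sub_rpow_mul_sub_rpow {a x r s : ℝ} (hax : a < x) :
    ∫ t in a..x, (x - t) ^ r * (t - a) ^ s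
      = (∫ v in (0:ℝ)..1, (1 - v) ^ r * v ^ s) * (x - a) ^ (r + s + 1) := by
  set c := x - a
  have hc : 0 < c := sub_pos.2 hax
  -- substitute `t = a + c v`
  have hsub : ∫ v in (0:ℝ)..1, (1 - v) ^ r * v ^ s
      = ∫ v in (0:ℝ)..1,
          (c ^ (r + s))⁻¹ * ((x - (a + c * v)) ^ r * (a + c * v - a) ^ s) := by
    refine integral_congr fun v hv => ?_
    rw [Set.uIcc_of_le zero_le_one] at hv
    rw [show x - (a + c * v) = c * (1 - v) by ring, add_sub_cancel_left,
      Real.mul_rpow hc.le (by linarith [hv.2]), Real.mul_rpow hc.le hv.1, Real.rpow_add hc]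
    field_simp
  rw [hsub, intervalIntegral.integral_const_mul,
    integral_comp_add_mul (fun t => (x - t) ^ r * (t - a) ^ s) hc.ne', mul_zero, add_zero,
    mul_one, add_sub_cancel, smul_eq_mul, Real.rpow_add_one hc.ne']
  field_simp

lemma fracInt_congr {μ x : ℝ} {f g : ℝ → ℝ} (hx : -1 ≤ x)
    (hfg : Set.EqOn f g (Set.Ioc (-1) x)) :
    fracInt μ f x = fracInt μ g x := by
  unfold fracInt
  congr 1
  refine integral_congr_ae (Filter.Eventually.of_forall fun t ht => ?_)
  rw [Set.uIoc_of_le hx] at ht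
  rw [hfg ht]

lemma fracInt_sum_one_add_rpow {ι : Type*} {μ x : ℝ} (hμ : 0 < μ) (hx : -1 < x)
    (s : Finset ι) (d e : ι → ℝ) (he : ∀ j ∈ s, -1 < e j) :
    fracInt μ (fun t => ∑ j ∈ s, d j * (1 + t) ^ e j) x
      = ∑ j ∈ s, d j * ((∫ v in (0:ℝ)..1, (1 - v) ^ (μ - 1) * v ^ e j) / Real.Gamma μ)
          * (1 + x) ^ (μ + e j) := by
  have hkernel : ∀ j ∈ s, ∫ t in (-1:ℝ)..x, (x - t) ^ (μ - 1) * (1 + t) ^ e j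
      = (∫ v in (0:ℝ)..1, (1 - v) ^ (μ - 1) * v ^ e j) * (1 + x) ^ (μ + e j) := by
    intro j hj
    have h := integral_sub_rpow_mul_sub_rpow (r := μ - 1) (s := e j) hx
    rw [show μ - 1 + e j + 1 = μ + e j by ring] at h
    simpa only [sub_neg_eq_add, add_comm _ (1 : ℝ)] using h
  have hint : ∀ j ∈ s, IntervalIntegrable (fun t => d j * ((x - t) ^ (μ - 1) * (1 + t) ^ e j))
      volume (-1) x := fun j hj => by
    simpa only [sub_neg_eq_add, add_comm _ (1 : ℝ)] using
      (intervalIntegrable_sub_rpow_mul_sub_rpow hx (by linarith) (he j hj)).const_mul (d j)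
  simp_rw [fracInt, Finset.mul_sum, mul_left_comm _ (d _)]
  rw [integral_finsetSum hint, Finset.mul_sum]
  refine Finset.sum_congr rfl fun j hj => ?_
  rw [intervalIntegral.integral_const_mul, hkernel j hj]
  ring

-- Functions on `(-1, ∞)`: only there is `Q_n` a combination of powers of `1 + t`.
noncomputable def jfpSpan (α β b p : ℝ) (N : ℕ) :
    Submodule ℝ (Set.Ioi (-1 : ℝ) → ℝ) :=
  Submodule.span ℝ ((fun i (t : Set.Ioi (-1 : ℝ)) => jfpQ α β b p i t) '' Set.Iic N)

lemma jfpSpan_mono (α β b p : ℝ) : Monotone (jfpSpan α β b p) := fun _ _ h =>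
  Submodule.span_mono (Set.image_mono (Set.Iic_subset_Iic.2 h))

lemma jfpQ_mem_jfpSpan (α β b p : ℝ) (N : ℕ) :
    (fun t : Set.Ioi (-1 : ℝ) => jfpQ α β b p N t) ∈ jfpSpan α β b p N :=
  Submodule.subset_span ⟨N, Set.self_mem_Iic, rfl⟩

lemma exists_eq_sum_of_mem_jfpSpan {α β b p : ℝ} {N : ℕ} {f : Set.Ioi (-1 : ℝ) → ℝ}
    (hf : f ∈ jfpSpan α β b p N) :
    ∃ c : ℕ → ℝ, ∀ t, f t = ∑ i ∈ Finset.range (N + 1), c i * jfpQ α β b p i t := by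
  obtain ⟨l, hl, rfl⟩ := (Finsupp.mem_span_image_iff_linearCombination ℝ).1 hf
  have hsupp : l.support ⊆ Finset.range (N + 1) := fun i hi => by
    simpa [Nat.lt_succ_iff] using hl hi
  refine ⟨l, fun t => ?_⟩
  rw [Finsupp.linearCombination_apply, Finsupp.sum_of_support_subset l hsupp _ (by simp)]
  simp [Finset.sum_apply]

lemma jfpQ_eq_sum (α β b p : ℝ) (n : ℕ) {t : ℝ} (ht : -1 < t) :
    jfpQ α β b p n t = ∑ j ∈ Finset.range (n + 1),
      Ccoef α β j n * 2 ^ ((1 - 1 / p) * (b + j)) * (1 + t) ^ ((b + j) / p) := by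
  have ht0 : 0 < 1 + t := by linarith
  have hy : 2 * ((1 + t) / 2) ^ (1 / p) = 2 ^ (1 - 1 / p) * (1 + t) ^ (1 / p) := by
    rw [Real.div_rpow ht0.le zero_le_two, Real.rpow_sub two_pos, Real.rpow_one]
    ring
  have hypos : 0 < 2 * ((1 + t) / 2) ^ (1 / p) := by positivity
  rw [jfpQ, jacobiP, Finset.mul_sum]
  refine Finset.sum_congr rfl fun j _ => ?_
  rw [add_sub_cancel, mul_left_comm, ← Real.rpow_natCast, ← Real.rpow_add hypos, hy,
    Real.mul_rpow (by positivity) (by positivity), ← Real.rpow_mul zero_le_two,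
    ← Real.rpow_mul ht0.le, one_div_mul_eq_div]
  ring

lemma Ccoef_self_pos {α β : ℝ} (hα : -1 < α) (hβ : -1 < β) (m : ℕ) :
    0 < Ccoef α β m m := by
  rw [Ccoef, if_pos le_rfl, Nat.sub_self]
  refine div_pos ?_ (by positivity)
  simp only [pow_zero, one_mul, ascPochhammer_zero, Polynomial.eval_one]
  rcases m.eq_zero_or_pos with rfl | hm
  · simp
  · refine ascPochhammer_pos m _ ?_
    have : (1 : ℝ) ≤ m := by exact_mod_cast hm
    linarith

lemma one_add_rpow_mem_jfpSpan {α β : ℝ} (hα : -1 < α) (hβ : -1 < β) (b p : ℝ) (m : ℕ) :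
    (fun t : Set.Ioi (-1 : ℝ) => (1 + (t : ℝ)) ^ ((b + m) / p)) ∈ jfpSpan α β b p m := by
  induction m using Nat.strong_induction_on with
  | _ m ih =>
  set E : ℕ → Set.Ioi (-1 : ℝ) → ℝ := fun j t => (1 + (t : ℝ)) ^ ((b + j) / p)
  set D : ℕ → ℝ := fun j => Ccoef α β j m * 2 ^ ((1 - 1 / p) * (b + j))
  have hD : D m ≠ 0 := (mul_pos (Ccoef_self_pos hα hβ m) (by positivity)).ne'
  have hQ : (fun t : Set.Ioi (-1 : ℝ) => jfpQ α β b p m t)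
      = ∑ j ∈ Finset.range m, D j • E j + D m • E m := by
    funext t
    simp [Finset.sum_apply, E, D, jfpQ_eq_sum α β b p m t.2, Finset.sum_range_succ]
  have hE : E m = (D m)⁻¹ • ((fun t : Set.Ioi (-1 : ℝ) => jfpQ α β b p m t)
      - ∑ j ∈ Finset.range m, D j • E j) := by
    rw [hQ, add_sub_cancel_left, smul_smul, inv_mul_cancel₀ hD, one_smul]
  show E m ∈ _
  rw [hE]
  refine Submodule.smul_mem _ _ (sub_mem (jfpQ_mem_jfpSpan α β b p m) (Submodule.sum_mem _ ?_))
  intro j hj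
  have hjm := Finset.mem_range.1 hj
  exact Submodule.smul_mem _ _ (jfpSpan_mono α β b p hjm.le (ih j hjm))

theorem fracInt_jfp_lower_banded_general
    (α β : ℝ) (hα : -1 < α) (hβ : -1 < β)
    (μ p b : ℝ) (hμ : 0 < μ) (hp : 0 < p)
    (k : ℕ) (hμp : μ * p = k) (hb : -p < b) (n : ℕ) :
    ∃ c : ℕ → ℝ, ∀ x ∈ Set.Ioc (-1 : ℝ) 1,
      fracInt μ (jfpQ α β b p n) x
        = ∑ m ∈ Finset.range (n + k + 1), c m * jfpQ α β b p m x := by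
  set d : ℕ → ℝ := fun j => Ccoef α β j n * 2 ^ ((1 - 1 / p) * (b + j))
  set B : ℕ → ℝ := fun j =>
    (∫ v in (0:ℝ)..1, (1 - v) ^ (μ - 1) * v ^ ((b + j) / p)) / Real.Gamma μ
  have hexp : ∀ j : ℕ, -1 < (b + j) / p := fun j => by
    rw [lt_div_iff₀ hp]
    linarith [(Nat.cast_nonneg j : (0 : ℝ) ≤ j)]
  have hshift : ∀ j : ℕ, μ + (b + j) / p = (b + (j + k : ℕ)) / p := fun j => by
    rw [eq_div_iff hp.ne', add_mul, div_mul_cancel₀ _ hp.ne', hμp]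
    push_cast
    ring
  have hmem : ∑ j ∈ Finset.range (n + 1), (d j * B j) • (fun t : Set.Ioi (-1 : ℝ) =>
      (1 + (t : ℝ)) ^ ((b + (j + k : ℕ)) / p)) ∈ jfpSpan α β b p (n + k) := by
    refine Submodule.sum_mem _ fun j hj => Submodule.smul_mem _ (d j * B j) ?_
    have hj' := Finset.mem_range.1 hj
    exact jfpSpan_mono α β b p (by omega) (one_add_rpow_mem_jfpSpan hα hβ b p (j + k))
  obtain ⟨c, hc⟩ := exists_eq_sum_of_mem_jfpSpan hmem
  refine ⟨c, fun x hx => ?_⟩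
  rw [fracInt_congr hx.1.le fun t ht => jfpQ_eq_sum α β b p n (t := t) ht.1,
    fracInt_sum_one_add_rpow hμ hx.1 _ _ _ fun j _ => hexp j, ← hc ⟨x, hx.1⟩]
  simp only [Finset.sum_apply, Pi.smul_apply, smul_eq_mul, hshift, d, B]

/-- `I^μ` maps the JFP basis to itself with lower bandwidth `k`. -/
theorem fracInt_jfp_lower_banded
    (α β : ℝ) (hα : -1 < α) (hβ : -1 < β)
    (μ p b : ℝ) (hμ : 0 < μ) (hp : 0 < p)
    (k : ℕ) (hk : 0 < k) (hμp : μ * p = k) (hb : -p < b) (n : ℕ) :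
    ∃ c : ℕ → ℝ, ∀ x ∈ Set.Ioc (-1 : ℝ) 1,
      fracInt μ (jfpQ α β b p n) x
        = ∑ m ∈ Finset.range (n + k + 1), c m * jfpQ α β b p m x :=
  fracInt_jfp_lower_banded_general α β hα hβ μ p b hμ hp k hμp hb n
end

section
/- Let α, β > −1, let μ, p > 0 with μp = k a positive integer, and let b > −p. For each n ∈ ℕ let A_{m,n} (0 ≤ m ≤ n+k) be the unique real coefficients with I^μ[Q_n^{(α,β,b,p)}] = Σ_{m=0}^{n+k} A_{m,n} Q_m^{(α,β,b,p)} on (−1,1], and set A_{m,n} = 0 for m > n+k. Then for all i, n ∈ ℕ the following finite-sum identity holds: Σ_{m=i}^{n+k} C^{(α,β)}_{i,m} A_{m,n} = 2^{μ(1−p)} · (Γ((b+i−k)/p + 1)/Γ((b+i−k)/p + μ + 1)) · C^{(α,β)}_{i−k,n} if i ≥ k (with C^{(α,β)}_{i−k,n} := 0 when i−k > n), and Σ_{m=i}^{n+k} C^{(α,β)}_{i,m} A_{m,n} = 0 if i < k. Equivalently, the fractional integration matrix A satisfies C^{(α,β)} A = 2^{μ(1−p)} Λ_{b/p,1/p}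 C^{(α,β)}, where Λ_{b/p,1/p} is the matrix supported on the k-th subdiagonal with entries Γ(b/p + j/p + 1)/Γ(b/p + j/p + μ + 1) in position (j+k, j). -/
open MeasureTheory

/-! For `x > -1`, `Q_m(x)` is the finite combination
`∑ᵢ C_{i,m} 2^{(b+i)(1-1/p)} (1+x)^{(b+i)/p}` of generalized monomials, and `I^μ` maps
`(1+x)^λ` to `Γ(λ+1)/Γ(λ+μ+1) (1+x)^{λ+μ}` (a Beta integral). As `μ = k/p`, this shifts the
exponent `(b+i)/p` to `(b+i+k)/p`, so both sides of `I^μ Q_n = ∑ₘ A_{m,n} Q_m` are combinations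
of the monomials `(1+x)^{(b+j)/p}`. These are linearly independent, and comparing the
coefficients of `(1+x)^{(b+j)/p}` gives the identity. -/

open Set

theorem integral_rpow_mul_one_sub_rpow {u v : ℝ} (hu : 0 < u) (hv : 0 < v) :
    ∫ s in (0 : ℝ)..1, s ^ (u - 1) * (1 - s) ^ (v - 1)
      = Real.Gamma u * Real.Gamma v / Real.Gamma (u + v) := by
  have hcast : ∀ s ∈ uIcc (0 : ℝ) 1, ((s ^ (u - 1) * (1 - s) ^ (v - 1) : ℝ) : ℂ)
      = (s : ℂ) ^ ((u : ℂ) - 1) * (1 - (s : ℂ)) ^ ((v : ℂ) - 1) := by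
    intro s hs
    rw [uIcc_of_le zero_le_one] at hs
    rw [Complex.ofReal_mul, Complex.ofReal_cpow hs.1, Complex.ofReal_cpow (sub_nonneg.2 hs.2)]
    push_cast
    rfl
  apply Complex.ofReal_injective
  rw [← intervalIntegral.integral_ofReal, intervalIntegral.integral_congr hcast,
    ← Complex.betaIntegral, Complex.betaIntegral_eq_Gamma_mul_div _ _ (by simpa) (by simpa),
    ← Complex.ofReal_add, Complex.Gamma_ofReal, Complex.Gamma_ofReal, Complex.Gamma_ofReal]
  push_cast
  rfl

theorem integral_sub_rpow_mul_one_add_rpow {μ l x : ℝ} (hμ : 0 < μ) (hl : -1 < l)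
    (hx : -1 < x) :
    ∫ t in (-1 : ℝ)..x, (x - t) ^ (μ - 1) * (1 + t) ^ l
      = Real.Gamma (l + 1) * Real.Gamma μ / Real.Gamma (l + μ + 1) * (1 + x) ^ (l + μ) := by
  have hX : 0 < 1 + x := by linarith
  -- the substitution `t = (1 + x) s - 1` turns the integral into a Beta integral
  have hsubst := intervalIntegral.integral_comp_mul_add (a := 0) (b := 1)
    (fun t => (x - t) ^ (μ - 1) * (1 + t) ^ l) hX.ne' (-1)
  have hpt : ∀ s ∈ uIcc (0 : ℝ) 1,
      (x - ((1 + x) * s + -1)) ^ (μ - 1) * (1 + ((1 + x) * s + -1)) ^ l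
        = (1 + x) ^ (l + μ - 1) * (s ^ (l + 1 - 1) * (1 - s) ^ (μ - 1)) := by
    intro s hs
    rw [uIcc_of_le zero_le_one] at hs
    rw [show x - ((1 + x) * s + -1) = (1 + x) * (1 - s) by ring,
      show 1 + ((1 + x) * s + -1) = (1 + x) * s by ring, add_sub_cancel_right,
      Real.mul_rpow hX.le (sub_nonneg.2 hs.2), Real.mul_rpow hX.le hs.1,
      show l + μ - 1 = (μ - 1) + l by ring, Real.rpow_add hX]
    ring
  rw [intervalIntegral.integral_congr hpt, intervalIntegral.integral_const_mul,
    integral_rpow_mul_one_sub_rpow (by linarith) hμ] at hsubst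
  simp only [mul_zero, mul_one, zero_add, smul_eq_mul] at hsubst
  rw [show 1 + x + -1 = x by ring, show l + 1 + μ = l + μ + 1 by ring,
    eq_inv_mul_iff_mul_eq₀ hX.ne', Real.rpow_sub_one hX.ne'] at hsubst
  rw [← hsubst]
  field_simp

theorem intervalIntegrable_sub_rpow_mul_one_add_rpow {μ l x : ℝ} (hμ : 0 < μ) (hl : -1 < l)
    (hx : -1 < x) :
    IntervalIntegrable (fun t => (x - t) ^ (μ - 1) * (1 + t) ^ l) volume (-1) x := by
  apply intervalIntegral.intervalIntegrable_of_integral_ne_zero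
  rw [integral_sub_rpow_mul_one_add_rpow hμ hl hx]
  have := Real.Gamma_pos_of_pos (show 0 < l + 1 by linarith)
  have := Real.Gamma_pos_of_pos hμ
  have := Real.Gamma_pos_of_pos (show 0 < l + μ + 1 by linarith)
  have : 0 < 1 + x := by linarith
  positivity

theorem fracInt_of_eqOn_sum_mul_one_add_rpow {ι : Type*} (s : Finset ι) (c r : ι → ℝ)
    {μ x : ℝ} {f : ℝ → ℝ} (hμ : 0 < μ) (hr : ∀ i ∈ s, -1 < r i) (hx : -1 < x)
    (hf : EqOn f (fun t => ∑ i ∈ s, c i * (1 + t) ^ r i) (Ioc (-1) x)) :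
    fracInt μ f x = ∑ i ∈ s, c i * (Real.Gamma (r i + 1) / Real.Gamma (r i + μ + 1))
      * (1 + x) ^ (r i + μ) := by
  have hcongr : ∫ t in (-1 : ℝ)..x, (x - t) ^ (μ - 1) * f t
      = ∫ t in (-1 : ℝ)..x, ∑ i ∈ s, c i * ((x - t) ^ (μ - 1) * (1 + t) ^ r i) := by
    refine intervalIntegral.integral_congr_ae (Filter.Eventually.of_forall fun t ht => ?_)
    rw [uIoc_of_le hx.le] at ht
    rw [hf ht, Finset.mul_sum]
    exact Finset.sum_congr rfl fun i _ => by ring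
  rw [fracInt, hcongr, intervalIntegral.integral_finsetSum fun i hi =>
    (intervalIntegrable_sub_rpow_mul_one_add_rpow hμ (hr i hi) hx).const_mul (c i),
    Finset.mul_sum]
  refine Finset.sum_congr rfl fun i hi => ?_
  rw [intervalIntegral.integral_const_mul, integral_sub_rpow_mul_one_add_rpow hμ (hr i hi) hx]
  have := (Real.Gamma_pos_of_pos hμ).ne'
  field_simp

theorem eq_zero_of_forall_sum_mul_rpow_eq_zero {N : ℕ} {c r : ℕ → ℝ}
    (hr : Function.Injective r)
    (h : ∀ u ∈ Ioc (0 : ℝ) 1, ∑ j ∈ Finset.range N, c j * u ^ r j = 0) {j : ℕ}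
    (hj : j < N) : c j = 0 := by
  -- at `u = 2⁻¹ ^ i`, `i < N`, this is a Vandermonde system in the nodes `2⁻¹ ^ r j`
  have hnodes : Function.Injective fun j : Fin N => (2⁻¹ : ℝ) ^ r j := fun j j' hjj' =>
    Fin.ext (hr ((Real.rpow_right_inj (by norm_num) (by norm_num)).1 hjj'))
  have hsys : ∀ i : Fin N, ∑ j : Fin N, c j * ((2⁻¹ : ℝ) ^ r j) ^ (i : ℕ) = 0 := by
    intro i
    have hu : (2⁻¹ : ℝ) ^ (i : ℕ) ∈ Ioc (0 : ℝ) 1 :=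
      ⟨by positivity, pow_le_one₀ (by norm_num) (by norm_num)⟩
    rw [← h _ hu,
      ← Fin.sum_univ_eq_sum_range (fun j => c j * ((2⁻¹ : ℝ) ^ (i : ℕ)) ^ r j)]
    simp_rw [Real.rpow_pow_comm (by norm_num : (0 : ℝ) ≤ 2⁻¹)]
  exact congrFun (Matrix.eq_zero_of_forall_pow_sum_mul_pow_eq_zero hnodes hsys) ⟨j, hj⟩

theorem Ccoef_eq_zero_of_lt {α β : ℝ} {k n : ℕ} (h : n < k) : Ccoef α β k n = 0 := by
  simp [Ccoef, h.not_ge]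

theorem sum_range_Ccoef_mul_eq_sum_Icc {α β : ℝ} (f : ℕ → ℝ) (i M : ℕ) :
    ∑ m ∈ Finset.range (M + 1), Ccoef α β i m * f m
      = ∑ m ∈ Finset.Icc i M, Ccoef α β i m * f m :=
  (Finset.sum_subset (fun m hm => Finset.mem_range.2 (by rw [Finset.mem_Icc] at hm; omega))
    fun m hm hm' => by
      rw [Finset.mem_range] at hm
      rw [Finset.mem_Icc] at hm'
      rw [Ccoef_eq_zero_of_lt (by omega), zero_mul]).symm

theorem jacobiP_eq_sum_range {α β : ℝ} {n N : ℕ} (hN : n < N) (y : ℝ) :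
    jacobiP α β n y = ∑ k ∈ Finset.range N, Ccoef α β k n * (1 + y) ^ k :=
  Finset.sum_subset (Finset.range_subset_range.2 hN) fun k _ hk => by
    rw [Ccoef_eq_zero_of_lt (by simpa using hk), zero_mul]

theorem jfpQ_eq_sum_range {α β b p : ℝ} {n N : ℕ} (hN : n < N) {x : ℝ} (hx : -1 < x) :
    jfpQ α β b p n x = ∑ i ∈ Finset.range N,
      Ccoef α β i n * 2 ^ ((b + i) * (1 - 1 / p)) * (1 + x) ^ ((b + i) / p) := by
  have hu : 0 < (1 + x) / 2 := by linarith
  rw [jfpQ, jacobiP_eq_sum_range hN, Finset.mul_sum]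
  refine Finset.sum_congr rfl fun i _ => ?_
  rw [add_sub_cancel, mul_left_comm, ← Real.rpow_natCast, ← Real.rpow_add (by positivity),
    Real.mul_rpow (by norm_num) (by positivity), ← Real.rpow_mul hu.le,
    Real.div_rpow (by linarith) (by norm_num),
    show (b + i) * (1 - 1 / p) = b + i - (b + i) / p by ring, Real.rpow_sub (by norm_num),
    one_div_mul_eq_div]
  ring

theorem fracInt_jfpQ {α β b p μ : ℝ} (hμ : 0 < μ) (hp : 0 < p) (hb : -p < b) (n : ℕ)
    {x : ℝ} (hx : -1 < x) :
    fracInt μ (jfpQ α β b p n) x = ∑ i ∈ Finset.range (n + 1),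
      Ccoef α β i n * 2 ^ ((b + i) * (1 - 1 / p))
        * (Real.Gamma ((b + i) / p + 1) / Real.Gamma ((b + i) / p + μ + 1))
        * (1 + x) ^ ((b + i) / p + μ) := by
  refine fracInt_of_eqOn_sum_mul_one_add_rpow _ _ _ hμ (fun i _ => ?_) hx
    fun t ht => jfpQ_eq_sum_range n.lt_succ_self ht.1
  rw [lt_div_iff₀ hp]
  linarith [(Nat.cast_nonneg i : (0 : ℝ) ≤ i)]

theorem sum_mul_jfpQ_eq_sum_range {α β b p : ℝ} (f : ℕ → ℝ) (M : ℕ) {x : ℝ}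
    (hx : -1 < x) :
    ∑ m ∈ Finset.range (M + 1), f m * jfpQ α β b p m x
      = ∑ j ∈ Finset.range (M + 1), (∑ m ∈ Finset.Icc j M, Ccoef α β j m * f m)
          * 2 ^ ((b + j) * (1 - 1 / p)) * (1 + x) ^ ((b + j) / p) := by
  rw [Finset.sum_congr rfl fun m hm => by
    rw [jfpQ_eq_sum_range (Finset.mem_range.1 hm) hx, Finset.mul_sum], Finset.sum_comm]
  refine Finset.sum_congr rfl fun j _ => ?_
  simp only [← sum_range_Ccoef_mul_eq_sum_Icc, Finset.sum_mul]
  exact Finset.sum_congr rfl fun m _ => by ring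

/-- The `(j, n)` entry of `2^{μ(1-p)} Λ_{b/p,1/p} C^{(α,β)}`. -/
noncomputable def lambdaCcoef (α β μ p b : ℝ) (k j n : ℕ) : ℝ :=
  if k ≤ j then
    2 ^ (μ * (1 - p))
      * (Real.Gamma ((b + (j - k : ℕ)) / p + 1) / Real.Gamma ((b + (j - k : ℕ)) / p + μ + 1))
      * Ccoef α β (j - k) n
  else 0

theorem fracInt_jfpQ_eq_sum_lambdaCcoef {α β μ p b : ℝ} (hμ : 0 < μ) (hp : 0 < p) {k : ℕ}
    (hμp : μ * p = k) (hb : -p < b) (n : ℕ) {x : ℝ} (hx : -1 < x) :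
    fracInt μ (jfpQ α β b p n) x
      = ∑ j ∈ Finset.range (n + k + 1), lambdaCcoef α β μ p b k j n
          * 2 ^ ((b + j) * (1 - 1 / p)) * (1 + x) ^ ((b + j) / p) := by
  have hμ_eq : μ = k / p := by rw [← hμp]; field_simp
  rw [show n + k + 1 = k + (n + 1) by omega, Finset.sum_range_add _ k (n + 1),
    Finset.sum_eq_zero (s := Finset.range k) fun j hj => by
      simp [lambdaCcoef, (Finset.mem_range.1 hj).not_ge],
    zero_add, fracInt_jfpQ hμ hp hb n hx]
  refine Finset.sum_congr rfl fun i _ => ?_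
  have htwo : (2 : ℝ) ^ ((b + i) * (1 - 1 / p))
      = 2 ^ (μ * (1 - p)) * 2 ^ ((b + (k + i : ℕ)) * (1 - 1 / p)) := by
    rw [← Real.rpow_add two_pos, hμ_eq]
    congr 1
    push_cast
    field_simp
    ring
  have hexp : (b + i) / p + μ = (b + (k + i : ℕ)) / p := by
    rw [hμ_eq]
    push_cast
    ring
  rw [lambdaCcoef, if_pos (Nat.le_add_right k i), Nat.add_sub_cancel_left, htwo, hexp]
  ring

theorem sum_Icc_Ccoef_mul_eq_lambdaCcoef {α β μ p b : ℝ} (hμ : 0 < μ) (hp : 0 < p) {k : ℕ}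
    (hμp : μ * p = k) (hb : -p < b) {A : ℕ → ℕ → ℝ} {n : ℕ}
    (hA : ∀ x ∈ Ioc (-1 : ℝ) 1,
      fracInt μ (jfpQ α β b p n) x
        = ∑ m ∈ Finset.range (n + k + 1), A m n * jfpQ α β b p m x)
    {j : ℕ} (hj : j ≤ n + k) :
    ∑ m ∈ Finset.Icc j (n + k), Ccoef α β j m * A m n = lambdaCcoef α β μ p b k j n := by
  have hr : Function.Injective fun j : ℕ => (b + j) / p := fun j j' h => by
    simpa [div_left_inj' hp.ne'] using h
  suffices ∀ u ∈ Ioc (0 : ℝ) 1, ∑ j ∈ Finset.range (n + k + 1),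
      (∑ m ∈ Finset.Icc j (n + k), Ccoef α β j m * A m n - lambdaCcoef α β μ p b k j n)
        * 2 ^ ((b + j) * (1 - 1 / p)) * u ^ ((b + j) / p) = 0 by
    have := eq_zero_of_forall_sum_mul_rpow_eq_zero hr this (Nat.lt_succ_of_le hj)
    exact sub_eq_zero.1 ((mul_eq_zero.1 this).resolve_right (by positivity))
  intro u hu
  have hx : u - 1 ∈ Ioc (-1 : ℝ) 1 := ⟨by linarith [hu.1], by linarith [hu.2]⟩
  have hcoef := hA _ hx
  rw [fracInt_jfpQ_eq_sum_lambdaCcoef hμ hp hμp hb n hx.1,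
    sum_mul_jfpQ_eq_sum_range (fun m => A m n) _ hx.1, add_sub_cancel] at hcoef
  simp only [sub_mul, Finset.sum_sub_distrib, hcoef, sub_self]

theorem fracInt_matrix_identity_general
    (α β : ℝ)
    (μ p b : ℝ) (hμ : 0 < μ) (hp : 0 < p)
    (k : ℕ) (hμp : μ * p = k) (hb : -p < b)
    (A : ℕ → ℕ → ℝ)
    (hA : ∀ n : ℕ, ∀ x ∈ Set.Ioc (-1 : ℝ) 1,
      fracInt μ (jfpQ α β b p n) x
        = ∑ m ∈ Finset.range (n + k + 1), A m n * jfpQ α β b p m x) :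
    ∀ i n : ℕ,
      (k ≤ i →
        ∑ m ∈ Finset.Icc i (n + k), Ccoef α β i m * A m n
          = 2 ^ (μ * (1 - p))
            * (Real.Gamma ((b + (i - k : ℕ)) / p + 1)
              / Real.Gamma ((b + (i - k : ℕ)) / p + μ + 1))
            * Ccoef α β (i - k) n) ∧
      (i < k → ∑ m ∈ Finset.Icc i (n + k), Ccoef α β i m * A m n = 0) := by
  intro i n
  rcases le_or_gt i (n + k) with hi | hi
  · rw [sum_Icc_Ccoef_mul_eq_lambdaCcoef hμ hp hμp hb (hA n) hi, lambdaCcoef]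
    exact ⟨fun hki => if_pos hki, fun hik => if_neg hik.not_ge⟩
  · refine ⟨fun _ => ?_, fun _ => by omega⟩
    rw [Finset.Icc_eq_empty_of_lt hi, Finset.sum_empty, Ccoef_eq_zero_of_lt (by omega), mul_zero]

/-- the fractional integration matrix `A` satisfies
`C^{(α,β)} A = 2^{μ(1-p)} Λ_{b/p,1/p} C^{(α,β)}`. -/
theorem fracInt_matrix_identity
    (α β : ℝ) (hα : -1 < α) (hβ : -1 < β)
    (μ p b : ℝ) (hμ : 0 < μ) (hp : 0 < p)
    (k : ℕ) (hk : 0 < k) (hμp : μ * p = k) (hb : -p < b)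
    (A : ℕ → ℕ → ℝ)
    (hA : ∀ n : ℕ, ∀ x ∈ Set.Ioc (-1 : ℝ) 1,
      fracInt μ (jfpQ α β b p n) x
        = ∑ m ∈ Finset.range (n + k + 1), A m n * jfpQ α β b p m x)
    (hA0 : ∀ m n : ℕ, n + k < m → A m n = 0) :
    ∀ i n : ℕ,
      (k ≤ i →
        ∑ m ∈ Finset.Icc i (n + k), Ccoef α β i m * A m n
          = 2 ^ (μ * (1 - p))
            * (Real.Gamma ((b + (i - k : ℕ)) / p + 1)
              / Real.Gamma ((b + (i - k : ℕ)) / p + μ + 1))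
            * Ccoef α β (i - k) n) ∧
      (i < k → ∑ m ∈ Finset.Icc i (n + k), Ccoef α β i m * A m n = 0) :=
  fracInt_matrix_identity_general α β μ p b hμ hp k hμp hb A hA
end

section
/- Let α, β > −1, b ∈ ℝ, let p be a positive integer, and let n ∈ ℕ. Then there exist real coefficients c_m for max(0, n−p) ≤ m ≤ n+p such that for every x ∈ (−1,1], x · Q_n^{(α,β,b,p)}(x) = Σ_{m=max(0,n−p)}^{n+p} c_m Q_m^{(α,β,b,p)}(x); that is, the matrix representing multiplication by x in the JFP basis has bandwidths (p, p). -/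
open Polynomial Submodule
open scoped Nat

lemma ascPochhammer_eval_succ_left {S : Type*} [CommSemiring S] (n : ℕ) (x : S) :
    (ascPochhammer S (n + 1)).eval x = x * (ascPochhammer S n).eval (x + 1) := by
  simp [ascPochhammer_succ_left]

section Coefficients

variable (α β : ℝ)

lemma Ccoef_of_lt {k n : ℕ} (h : n < k) : Ccoef α β k n = 0 := by
  simp [Ccoef, Nat.not_le.2 h]

lemma Ccoef_self_add (k j : ℕ) :
    Ccoef α β k (k + j) = (-1 : ℝ) ^ j * (ascPochhammer ℝ j).eval ((k : ℝ) + β + 1)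
      * (ascPochhammer ℝ k).eval (((k + j : ℕ) : ℝ) + α + β + 1) / (2 ^ k * j ! * k !) := by
  simp [Ccoef]

lemma Ccoef_zero_succ (n : ℕ) :
    ((n : ℝ) + 1) * Ccoef α β 0 (n + 1) = -((n : ℝ) + β + 1) * Ccoef α β 0 n := by
  simp only [Ccoef, zero_le, if_true, Nat.sub_zero, ascPochhammer_succ_eval, ascPochhammer_zero,
    eval_one, Nat.factorial_succ]
  push_cast
  field_simp
  ring

/- The next two relations hold for all `k` and `n`: outside the triangle `k ≤ n` the real
prefactor vanishes together with the coefficient. -/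
lemma Ccoef_succ_right (k n : ℕ) :
    ((n : ℝ) + 1 - k) * (n + α + β + 1) * Ccoef α β k (n + 1)
      = -((n : ℝ) + β + 1) * (n + α + β + 1 + k) * Ccoef α β k n := by
  rcases le_or_gt k n with hkn | hnk
  · obtain ⟨j, rfl⟩ := Nat.exists_eq_add_of_le hkn
    have hQ := ascPochhammer_succ_eval k ((k : ℝ) + j + α + β + 1)
    rw [ascPochhammer_eval_succ_left,
      show (k : ℝ) + j + α + β + 1 + 1 = k + (j + 1) + α + β + 1 by ring] at hQ
    rw [show k + j + 1 = k + (j + 1) by ring, Ccoef_self_add, Ccoef_self_add,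
      ascPochhammer_succ_eval, Nat.factorial_succ]
    push_cast
    field_simp
    linear_combination ((j : ℝ) + 1) * (-1) ^ (j + 1) * (k + β + 1 + j)
      * (ascPochhammer ℝ j).eval ((k : ℝ) + β + 1) * hQ
  · rcases (Nat.succ_le_of_lt hnk).eq_or_lt with rfl | hlt
    · rw [Ccoef_of_lt α β hnk]; push_cast; ring
    · rw [Ccoef_of_lt α β hnk, Ccoef_of_lt α β hlt]; ring

lemma Ccoef_succ_left (k n : ℕ) :
    2 * ((k : ℝ) + 1) * (k + β + 1) * Ccoef α β (k + 1) n
      = -((n : ℝ) - k) * (n + α + β + 1 + k) * Ccoef α β k n := by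
  rcases lt_or_ge k n with hkn | hnk
  · obtain ⟨j, rfl⟩ := Nat.exists_eq_add_of_lt hkn
    have hP := ascPochhammer_eval_succ_left j ((k : ℝ) + β + 1)
    rw [show (k : ℝ) + β + 1 + 1 = k + 1 + β + 1 by ring] at hP
    rw [show k + j + 1 = k + (j + 1) by ring, Ccoef_self_add, show k + (j + 1) = k + 1 + j by ring,
      Ccoef_self_add, ascPochhammer_succ_eval k, hP, Nat.factorial_succ, Nat.factorial_succ,
      pow_succ]
    push_cast
    field_simp
    ring
  · rcases hnk.eq_or_lt with rfl | hlt
    · rw [Ccoef_of_lt α β (Nat.lt_succ_self _)]; ring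
    · rw [Ccoef_of_lt α β hlt, Ccoef_of_lt α β (hlt.trans (Nat.lt_succ_self _))]; ring

end Coefficients

section Recurrence

variable (α β N : ℝ)

def jacobiRecD : ℝ := (2 * N + α + β) * (2 * N + α + β + 1) * (2 * N + α + β + 2)

def jacobiRecA : ℝ := 2 * (N + 1) * (N + α + β + 1) * (2 * N + α + β)

def jacobiRecB : ℝ :=
  (2 * N + α + β + 1) * ((2 * N + α + β) * (2 * N + α + β + 2) + β ^ 2 - α ^ 2)

def jacobiRecC : ℝ := 2 * (N + α) * (N + β) * (2 * N + α + β + 2)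

end Recurrence

lemma Ccoef_recurrence_zero (α β : ℝ) (m : ℕ) :
    jacobiRecA α β (m + 1) * Ccoef α β 0 (m + 2) + jacobiRecB α β (m + 1) * Ccoef α β 0 (m + 1)
      + jacobiRecC α β (m + 1) * Ccoef α β 0 m = 0 := by
  have h1 := Ccoef_zero_succ α β m
  have h2 := Ccoef_zero_succ α β (m + 1)
  have e1 : Ccoef α β 0 (m + 1) = -((m : ℝ) + β + 1) / (m + 1) * Ccoef α β 0 m := by
    field_simp; linear_combination h1
  have e2 : Ccoef α β 0 (m + 2) = -((m : ℝ) + β + 2) / (m + 2) * Ccoef α β 0 (m + 1) := by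
    push_cast at h2; field_simp; linear_combination h2
  rw [e2, e1, jacobiRecA, jacobiRecB, jacobiRecC]
  field_simp
  ring

lemma Ccoef_recurrence_succ {α β : ℝ} (hα : -1 < α) (hβ : -1 < β) (m i : ℕ) :
    jacobiRecD α β (m + 1) * Ccoef α β i (m + 1)
      = jacobiRecA α β (m + 1) * Ccoef α β (i + 1) (m + 2)
        + jacobiRecB α β (m + 1) * Ccoef α β (i + 1) (m + 1)
        + jacobiRecC α β (m + 1) * Ccoef α β (i + 1) m := by
  have hm : (0 : ℝ) ≤ m := m.cast_nonneg
  have hi : (0 : ℝ) ≤ i := i.cast_nonneg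
  have hi1 : (i : ℝ) + 1 ≠ 0 := by positivity
  have hiβ : (i : ℝ) + β + 1 ≠ 0 := by linarith
  have hmβ : (m : ℝ) + β + 1 ≠ 0 := by linarith
  have hmi : (m : ℝ) + α + β + 2 + i ≠ 0 := by linarith
  have hm2 : (m : ℝ) + α + β + 2 ≠ 0 := by linarith
  have h1 := Ccoef_succ_left α β i (m + 1)
  have h2 := Ccoef_succ_right α β (i + 1) m
  have h3 := Ccoef_succ_right α β i (m + 1)
  have h4 := Ccoef_succ_left α β i (m + 2)
  push_cast at h1 h2 h3 h4
  set x := Ccoef α β i (m + 1)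
  have e1 : Ccoef α β (i + 1) (m + 1)
      = -((m : ℝ) + 1 - i) * (m + α + β + 2 + i) / (2 * ((i : ℝ) + 1) * (i + β + 1)) * x := by
    field_simp; linear_combination h1
  have e2 : Ccoef α β (i + 1) m
      = -((m : ℝ) - i) * (m + α + β + 1) / (((m : ℝ) + β + 1) * (m + α + β + 2 + i))
        * Ccoef α β (i + 1) (m + 1) := by
    field_simp; linear_combination h2
  -- `m + 2 - i` may vanish, so it is carried along rather than divided out
  have e3 : ((m : ℝ) + 2 - i) * Ccoef α β i (m + 2)
      = -((m : ℝ) + β + 2) * (m + α + β + 2 + i) / (m + α + β + 2) * x := by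
    field_simp; linear_combination h3
  have e4 : Ccoef α β (i + 1) (m + 2)
      = -(m + α + β + 3 + i) / (2 * ((i : ℝ) + 1) * (i + β + 1))
        * (((m : ℝ) + 2 - i) * Ccoef α β i (m + 2)) := by
    field_simp; linear_combination h4
  rw [e4, e3, e2, e1, jacobiRecA, jacobiRecB, jacobiRecC, jacobiRecD]
  field_simp
  ring

noncomputable def jacobiPoly (α β : ℝ) (n : ℕ) : ℝ[X] :=
  ∑ k ∈ Finset.range (n + 1), C (Ccoef α β k n) * X ^ k

lemma coeff_jacobiPoly (α β : ℝ) (n k : ℕ) : (jacobiPoly α β n).coeff k = Ccoef α β k n := by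
  simp only [jacobiPoly, finsetSum_coeff, coeff_C_mul_X_pow, Finset.sum_ite_eq, Finset.mem_range]
  split_ifs with hk
  · rfl
  · exact (Ccoef_of_lt α β (by omega)).symm

lemma jacobiP_eq_eval (α β : ℝ) (n : ℕ) (x : ℝ) :
    jacobiP α β n x = (jacobiPoly α β n).eval (1 + x) := by
  simp [jacobiP, jacobiPoly, eval_finsetSum]

lemma jfpQ_eq_rpow_mul_eval (α β b p : ℝ) (n : ℕ) (x : ℝ) :
    jfpQ α β b p n x = (2 * ((1 + x) / 2) ^ (1 / p)) ^ b
      * (jacobiPoly α β n).eval (2 * ((1 + x) / 2) ^ (1 / p)) := by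
  rw [jfpQ, jacobiP_eq_eval, add_sub_cancel]

lemma jacobiPoly_recurrence {α β : ℝ} (hα : -1 < α) (hβ : -1 < β) (m : ℕ) :
    C (jacobiRecD α β (m + 1)) * (X * jacobiPoly α β (m + 1))
      = C (jacobiRecA α β (m + 1)) * jacobiPoly α β (m + 2)
        + C (jacobiRecB α β (m + 1)) * jacobiPoly α β (m + 1)
        + C (jacobiRecC α β (m + 1)) * jacobiPoly α β m := by
  ext (_ | i)
  · simp only [coeff_add, coeff_C_mul, coeff_X_mul_zero, coeff_jacobiPoly, mul_zero]
    exact (Ccoef_recurrence_zero α β m).symm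
  · simp only [coeff_add, coeff_C_mul, coeff_X_mul, coeff_jacobiPoly]
    exact Ccoef_recurrence_succ hα hβ m i

lemma X_mul_jacobiPoly_zero_mem_span {α β : ℝ} (hs : α + β + 2 ≠ 0) :
    X * jacobiPoly α β 0 ∈ span ℝ (jacobiPoly α β '' Set.Icc 0 1) := by
  have h0 : jacobiPoly α β 0 = 1 := by simp [jacobiPoly, Ccoef]
  have h1 : jacobiPoly α β 1 = C (-(β + 1)) + C ((α + β + 2) / 2) * X := by
    simp [jacobiPoly, Ccoef, Finset.sum_range_succ]
    ring
  have key : X * jacobiPoly α β 0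
      = (2 / (α + β + 2)) • jacobiPoly α β 1 + (2 * (β + 1) / (α + β + 2)) • jacobiPoly α β 0 := by
    refine Polynomial.funext fun t => ?_
    simp only [h0, h1, eval_add, eval_mul, eval_smul, eval_C, eval_X, eval_one, smul_eq_mul]
    field_simp
    ring
  rw [key]
  exact add_mem (smul_mem _ _ (subset_span ⟨1, by simp, rfl⟩))
    (smul_mem _ _ (subset_span ⟨0, by simp, rfl⟩))

lemma X_mul_jacobiPoly_mem_span {α β : ℝ} (hα : -1 < α) (hβ : -1 < β) (n : ℕ) :
    X * jacobiPoly α β n ∈ span ℝ (jacobiPoly α β '' Set.Icc (n - 1) (n + 1)) := by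
  -- `jacobiRecD α β 0 = (α + β) (α + β + 1) (α + β + 2)` may vanish
  rcases n with _ | m
  · exact X_mul_jacobiPoly_zero_mem_span (by linarith)
  have hD : jacobiRecD α β (m + 1) ≠ 0 := by
    have hm : (0 : ℝ) ≤ m := m.cast_nonneg
    have : 0 < 2 * ((m : ℝ) + 1) + α + β := by linarith
    rw [jacobiRecD]; positivity
  have key : X * jacobiPoly α β (m + 1)
      = (jacobiRecD α β (m + 1))⁻¹ • (C (jacobiRecA α β (m + 1)) * jacobiPoly α β (m + 2)
        + C (jacobiRecB α β (m + 1)) * jacobiPoly α β (m + 1)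
        + C (jacobiRecC α β (m + 1)) * jacobiPoly α β m) := by
    rw [← jacobiPoly_recurrence hα hβ, smul_eq_C_mul, ← mul_assoc, ← C_mul, inv_mul_cancel₀ hD,
      C_1, one_mul]
  have mem : ∀ k ∈ Set.Icc m (m + 2), jacobiPoly α β k
      ∈ span ℝ (jacobiPoly α β '' Set.Icc (m + 1 - 1) (m + 1 + 1)) :=
    fun k hk => subset_span ⟨k, hk, rfl⟩
  rw [key]
  simp only [← smul_eq_C_mul]
  refine smul_mem _ _ (add_mem (add_mem ?_ ?_) ?_) <;>
    exact smul_mem _ _ (mem _ ⟨by omega, by omega⟩)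

lemma X_mul_mem_span_jacobiPoly {α β : ℝ} (hα : -1 < α) (hβ : -1 < β) {a b : ℕ} {q : ℝ[X]}
    (hq : q ∈ span ℝ (jacobiPoly α β '' Set.Icc a b)) :
    X * q ∈ span ℝ (jacobiPoly α β '' Set.Icc (a - 1) (b + 1)) := by
  have hle : span ℝ (jacobiPoly α β '' Set.Icc a b)
      ≤ (span ℝ (jacobiPoly α β '' Set.Icc (a - 1) (b + 1))).comap (LinearMap.mulLeft ℝ X) := by
    rw [span_le]
    rintro _ ⟨m, ⟨ham, hmb⟩, rfl⟩
    refine span_mono (Set.image_mono ?_) (X_mul_jacobiPoly_mem_span hα hβ m)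
    exact Set.Icc_subset_Icc (by omega) (by omega)
  exact hle hq

lemma X_pow_mul_jacobiPoly_mem_span {α β : ℝ} (hα : -1 < α) (hβ : -1 < β) (j n : ℕ) :
    X ^ j * jacobiPoly α β n ∈ span ℝ (jacobiPoly α β '' Set.Icc (n - j) (n + j)) := by
  induction j with
  | zero => exact subset_span ⟨n, by simp, by simp⟩
  | succ j ih =>
    rw [pow_succ', mul_assoc, Nat.sub_succ', ← add_assoc]
    exact X_mul_mem_span_jacobiPoly hα hβ ih

/-- multiplication by `x` in the JFP basis has bandwidths `(p, p)`. -/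
theorem jfp_mul_x_banded
    (α β : ℝ) (hα : -1 < α) (hβ : -1 < β) (b : ℝ) (p : ℕ) (hp : 0 < p) (n : ℕ) :
    ∃ c : ℕ → ℝ, ∀ x ∈ Set.Ioc (-1 : ℝ) 1,
      x * jfpQ α β b p n x
        = ∑ m ∈ Finset.Icc (n - p) (n + p), c m * jfpQ α β b p m x := by
  have hmem : (2 ^ (p - 1) : ℝ)⁻¹ • (X ^ p * jacobiPoly α β n) - jacobiPoly α β n
      ∈ span ℝ (jacobiPoly α β '' ↑(Finset.Icc (n - p) (n + p))) := by
    rw [Finset.coe_Icc]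
    exact sub_mem (smul_mem _ _ (X_pow_mul_jacobiPoly_mem_span hα hβ p n))
      (subset_span ⟨n, ⟨by omega, by omega⟩, rfl⟩)
  obtain ⟨c, hc⟩ := (mem_span_image_finset_iff_exists_fun' ℝ).1 hmem
  refine ⟨c, fun x hx => ?_⟩
  have hxu : x = (2 ^ (p - 1) : ℝ)⁻¹ * (2 * ((1 + x) / 2) ^ (1 / (p : ℝ))) ^ p - 1 := by
    rw [mul_pow, one_div, Real.rpow_inv_natCast_pow (by linarith [hx.1]) hp.ne',
      ← pow_sub_one_mul hp.ne']
    field_simp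
    ring
  simp only [jfpQ_eq_rpow_mul_eval]
  set u := 2 * ((1 + x) / 2) ^ (1 / (p : ℝ))
  calc x * (u ^ b * (jacobiPoly α β n).eval u)
      = u ^ b * ((2 ^ (p - 1) : ℝ)⁻¹ • (X ^ p * jacobiPoly α β n) - jacobiPoly α β n).eval u := by
        rw [hxu]; simp only [eval_sub, eval_smul, eval_mul, eval_pow, eval_X, smul_eq_mul]; ring
    _ = ∑ m ∈ Finset.Icc (n - p) (n + p), c m * (u ^ b * (jacobiPoly α β m).eval u) := by
        rw [← hc, eval_finsetSum, Finset.mul_sum]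
        exact Finset.sum_congr rfl fun m _ => by simp only [eval_smul, smul_eq_mul]; ring
end
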